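/- Let A be a nonempty finite action set, let Δmax ≥ 0 and α ≥ 0. Consider predictive regret matching (PRM) run for T steps with an arbitrary prediction sequence p^1, …, p^T satisfying p^t ∈ [−α, α]^A for every t, against an arbitrary reward sequence x^1, …, x^T satisfying x^t_a ∈ [c, c + Δmax] for some fixed c ∈ ℝ and all t ≤ T, a ∈ A. Then the external regret after T steps satisfies R^{ext,T} = max_{a∈A} R^T_a ≤ √2 · (2·Δmax + α) · √(|A| · T). In particular the external regret is O(√T), so PRM equipped with any predictor whose outputs are bounded in [−α, α]^A is a regret minimizer. (Theorem 1, Correctness of Neural-Predicting.) -/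

import Mathlib

open Finset

/-- Instantaneous regret vector: `r(σ, x)_a = x_a − ⟨σ, x⟩`. -/
noncomputable def instRegret {A : Type*} [Fintype A] (σ x : A → ℝ) : A → ℝ :=
  fun a => x a - ∑ b, σ b * x b

/-- Strategy obtained by normalizing a nonnegative vector `ξ`; uniform if `ξ = 0`. -/
noncomputable def stratOf {A : Type*} [Fintype A] (ξ : A → ℝ) : A → ℝ :=
  if 0 < ∑ a, ξ a then fun a => ξ a / ∑ b, ξ b
  else fun _ => (Fintype.card A : ℝ)⁻¹

/-- PRM strategy from previous cumulative regret `R` and current prediction `pt`: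
`σ = [R + p]⁺ / ‖[R + p]⁺‖₁` (uniform if the positive part vanishes). -/
noncomputable def prmSigmaAux {A : Type*} [Fintype A] (pt R : A → ℝ) : A → ℝ :=
  stratOf (fun a => max (R a + pt a) 0)

/-- PRM cumulative regret: `R^0 = 0`, `R^t = R^{t−1} + r(σ^t, x^t)`. -/
noncomputable def prmR {A : Type*} [Fintype A] (p x : ℕ → A → ℝ) : ℕ → A → ℝ
  | 0 => fun _ => 0
  | t + 1 => fun a =>
      prmR p x t a + instRegret (prmSigmaAux (p (t + 1)) (prmR p x t)) (x (t + 1)) a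

/-- PRM strategy at step `t ≥ 1`. -/
noncomputable def prmSigma {A : Type*} [Fintype A] (p x : ℕ → A → ℝ) (t : ℕ) : A → ℝ :=
  prmSigmaAux (p t) (prmR p x (t - 1))

/-!
The potential `Φ(R) = ∑ₐ ([Rₐ]⁺)²` grows by at most `|A| (2αΔ + Δ²)` per step. Expanding the
square leaves the cross term `⟨[R]⁺, r⟩`; the strategy is proportional to `ξ = [R + p]⁺`, so
`⟨ξ, r⟩ = 0` (Blackwell's condition), and `[R]⁺` lies within `α` of `ξ` coordinatewise, whence
`⟨[R]⁺, r⟩ ≤ |A| α Δ`. After `T` steps every `Rₐ ≤ √Φ ≤ √(T |A| (2αΔ + Δ²))`.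
-/

section RegretMatching

variable {A : Type*} [Fintype A]

lemma stratOf_mem_stdSimplex [Nonempty A] {ξ : A → ℝ} (hξ : ∀ a, 0 ≤ ξ a) :
    stratOf ξ ∈ stdSimplex ℝ A := by
  unfold stratOf
  split_ifs with h
  · refine ⟨fun a => div_nonneg (hξ a) h.le, ?_⟩
    rw [← Finset.sum_div, div_self h.ne']
  · refine ⟨fun _ => by positivity, ?_⟩
    simp [Finset.card_univ]

lemma sum_mul_instRegret (w σ x : A → ℝ) :
    ∑ a, w a * instRegret σ x a = ∑ a, w a * x a - (∑ a, w a) * ∑ b, σ b * x b := by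
  simp only [instRegret, mul_sub, Finset.sum_sub_distrib, Finset.sum_mul]

lemma sum_mul_instRegret_stratOf {ξ : A → ℝ} (hξ : ∀ a, 0 ≤ ξ a) (x : A → ℝ) :
    ∑ a, ξ a * instRegret (stratOf ξ) x a = 0 := by
  rw [sum_mul_instRegret]
  unfold stratOf
  split_ifs with h
  · simp only [div_mul_eq_mul_div, ← Finset.sum_div]
    rw [mul_div_cancel₀ _ h.ne', sub_self]
  · have hξ0 : ∀ a, ξ a = 0 := fun a =>
      (Finset.sum_eq_zero_iff_of_nonneg fun b _ => hξ b).mp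
        (le_antisymm (not_lt.mp h) (Finset.sum_nonneg fun _ _ => hξ _)) a (Finset.mem_univ a)
    simp [hξ0]

lemma abs_instRegret_le {σ x : A → ℝ} (hσ : σ ∈ stdSimplex ℝ A) {c Δ : ℝ}
    (hx : ∀ a, x a ∈ Set.Icc c (c + Δ)) (a : A) : |instRegret σ x a| ≤ Δ := by
  have hmean : ∑ b, σ b * x b ∈ Set.Icc c (c + Δ) := by
    simpa only [smul_eq_mul] using
      (convex_Icc c (c + Δ)).sum_mem (fun b _ => hσ.1 b) hσ.2 fun b _ => hx b
  simpa only [instRegret, Real.dist_eq, add_sub_cancel_left] using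
    Real.dist_le_of_mem_Icc (hx a) hmean

def regretPotential (R : A → ℝ) : ℝ :=
  ∑ a, max (R a) 0 ^ 2

lemma le_sqrt_regretPotential (R : A → ℝ) (a : A) : R a ≤ √(regretPotential R) :=
  (le_max_left _ _).trans <| Real.le_sqrt_of_sq_le <|
    Finset.single_le_sum (f := fun b => max (R b) 0 ^ 2) (fun _ _ => sq_nonneg _)
      (Finset.mem_univ a)

lemma sq_max_add_le (u v : ℝ) : max (u + v) 0 ^ 2 ≤ (max u 0 + v) ^ 2 := by
  have h : max (u + v) 0 ≤ |max u 0 + v| :=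
    max_le ((add_le_add_left (le_max_left u 0) v).trans (le_abs_self _)) (abs_nonneg _)
  simpa only [sq_abs] using pow_le_pow_left₀ (le_max_right _ _) h 2

lemma regretPotential_add_le (R r : A → ℝ) :
    regretPotential (R + r) ≤
      regretPotential R + 2 * ∑ a, max (R a) 0 * r a + ∑ a, r a ^ 2 :=
  calc regretPotential (R + r) ≤ ∑ a, (max (R a) 0 + r a) ^ 2 :=
        Finset.sum_le_sum fun a _ => sq_max_add_le (R a) (r a)
    _ = _ := by
        simp only [regretPotential, add_sq, Finset.sum_add_distrib, Finset.mul_sum, mul_assoc]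

variable [Nonempty A] {R q x : A → ℝ} {α c Δ : ℝ}

lemma sum_max_mul_instRegret_prmSigmaAux_le (hq : ∀ a, |q a| ≤ α)
    (hx : ∀ a, x a ∈ Set.Icc c (c + Δ)) :
    ∑ a, max (R a) 0 * instRegret (prmSigmaAux q R) x a ≤ Fintype.card A * (α * Δ) := by
  set ξ : A → ℝ := fun a => max (R a + q a) 0
  have hξ : ∀ a, 0 ≤ ξ a := fun a => le_max_right _ _
  have hr := abs_instRegret_le (stratOf_mem_stdSimplex hξ) hx
  have hclose : ∀ a, |max (R a) 0 - ξ a| ≤ α := fun a =>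
    (abs_max_sub_max_le_abs _ _ _).trans <| by simpa [abs_neg] using hq a
  calc ∑ a, max (R a) 0 * instRegret (stratOf ξ) x a
        = ∑ a, (max (R a) 0 - ξ a) * instRegret (stratOf ξ) x a := by
          simp only [sub_mul, Finset.sum_sub_distrib, sum_mul_instRegret_stratOf hξ, sub_zero]
    _ ≤ Fintype.card A • (α * Δ) := by
        refine Finset.sum_le_card_nsmul _ _ _ fun a _ => (le_abs_self _).trans ?_
        rw [abs_mul]
        exact mul_le_mul (hclose a) (hr a) (abs_nonneg _) ((abs_nonneg _).trans (hclose a))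
    _ = _ := nsmul_eq_mul _ _

lemma sum_sq_instRegret_prmSigmaAux_le (hx : ∀ a, x a ∈ Set.Icc c (c + Δ)) :
    ∑ a, instRegret (prmSigmaAux q R) x a ^ 2 ≤ Fintype.card A * Δ ^ 2 := by
  have hr : ∀ a, |instRegret (prmSigmaAux q R) x a| ≤ Δ :=
    abs_instRegret_le (stratOf_mem_stdSimplex fun a => le_max_right (R a + q a) 0) hx
  calc _ ≤ Fintype.card A • Δ ^ 2 := Finset.sum_le_card_nsmul _ _ _ fun a _ => by
        simpa only [sq_abs] using pow_le_pow_left₀ (abs_nonneg _) (hr a) 2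
    _ = _ := nsmul_eq_mul _ _

lemma regretPotential_add_instRegret_prmSigmaAux_le (hq : ∀ a, |q a| ≤ α)
    (hx : ∀ a, x a ∈ Set.Icc c (c + Δ)) :
    regretPotential (R + instRegret (prmSigmaAux q R) x) ≤
      regretPotential R + Fintype.card A * (2 * α * Δ + Δ ^ 2) := by
  have := regretPotential_add_le R (instRegret (prmSigmaAux q R) x)
  have := sum_max_mul_instRegret_prmSigmaAux_le (R := R) hq hx
  have := sum_sq_instRegret_prmSigmaAux_le (R := R) (q := q) hx
  linarith

end RegretMatching

lemma prmR_succ {A : Type*} [Fintype A] (p x : ℕ → A → ℝ) (t : ℕ) :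
    prmR p x (t + 1) =
      prmR p x t + instRegret (prmSigmaAux (p (t + 1)) (prmR p x t)) (x (t + 1)) :=
  rfl

lemma regretPotential_prmR_le {A : Type*} [Fintype A] [Nonempty A] {α c Δ : ℝ}
    {p x : ℕ → A → ℝ} {T : ℕ} (hp : ∀ t, 1 ≤ t → t ≤ T → ∀ a, |p t a| ≤ α)
    (hx : ∀ t, 1 ≤ t → t ≤ T → ∀ a, x t a ∈ Set.Icc c (c + Δ)) :
    regretPotential (prmR p x T) ≤ T * (Fintype.card A * (2 * α * Δ + Δ ^ 2)) := by
  induction T with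
  | zero => simp [regretPotential, prmR]
  | succ n ih =>
    have hprev := ih (fun t h1 h2 => hp t h1 (h2.trans n.le_succ))
      (fun t h1 h2 => hx t h1 (h2.trans n.le_succ))
    have hstep := regretPotential_add_instRegret_prmSigmaAux_le (R := prmR p x n)
      (hp (n + 1) (Nat.le_add_left 1 n) le_rfl) (hx (n + 1) (Nat.le_add_left 1 n) le_rfl)
    rw [prmR_succ]
    push_cast
    linarith

/-- **Theorem 1 (Correctness of Neural-Predicting).**
If every prediction lies in `[−α, α]^A` and every reward coordinate lies in
`[c, c + Δmax]`, then the external regret of PRM after `T` steps is at most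
`√2 · (2·Δmax + α) · √(|A| · T)`. -/
theorem prm_external_regret_bound
    {A : Type*} [Fintype A] [Nonempty A]
    (Δmax α : ℝ) (hΔ : 0 ≤ Δmax) (hα : 0 ≤ α)
    (T : ℕ) (p x : ℕ → A → ℝ) (c : ℝ)
    (hp : ∀ t, 1 ≤ t → t ≤ T → ∀ a, |p t a| ≤ α)
    (hx : ∀ t, 1 ≤ t → t ≤ T → ∀ a, x t a ∈ Set.Icc c (c + Δmax)) :
    Finset.univ.sup' Finset.univ_nonempty (fun a => prmR p x T a) ≤
      Real.sqrt 2 * (2 * Δmax + α) * Real.sqrt ((Fintype.card A : ℝ) * T) := by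
  have hcT : (0 : ℝ) ≤ Fintype.card A * T := by positivity
  have hgap : 0 ≤ 7 * Δmax ^ 2 + 6 * α * Δmax + 2 * α ^ 2 := by
    nlinarith [sq_nonneg (2 * α + 3 * Δmax), sq_nonneg Δmax]
  refine Finset.sup'_le _ _ fun a _ => ?_
  calc prmR p x T a ≤ √(regretPotential (prmR p x T)) := le_sqrt_regretPotential _ a
    _ ≤ √(T * (Fintype.card A * (2 * α * Δmax + Δmax ^ 2))) :=
        Real.sqrt_le_sqrt (regretPotential_prmR_le hp hx)
    _ ≤ √(2 * (2 * Δmax + α) ^ 2 * (Fintype.card A * T)) :=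
        Real.sqrt_le_sqrt (by nlinarith [mul_nonneg hcT hgap])
    _ = √2 * (2 * Δmax + α) * √(Fintype.card A * T) := by
        rw [Real.sqrt_mul (by positivity), Real.sqrt_mul zero_le_two,
          Real.sqrt_sq (by linarith)]
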